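/- There exist a constant C > 1 and μ₀ > 0 (depending only on α, L, ξ) such that for every μ ≥ μ₀, | ∫_{α²}^{T_{μ,L}} ∫_ℝ max(μ − (x+ξ)² e^{2t}/L², 0)^{1/2} dx dt − Σ_{ℓ ∈ ℤ} w_ℓ(μ) | ≤ C·√μ·ln μ. -/

import Mathlib

/-!
For fixed `t` the inner integrand `x ↦ √(max (μ - (x + ξ)² e^{2t} / L²) 0)` is a half-ellipse of
height `√μ` and area `(π/2) μ L e^{-t}`; it increases up to its peak at `-ξ ∈ (-1, 0)` and
decreases after it. Comparing the integral of such a function with the sum of its values at the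
integers, separately on `(-∞, -1]` and on `[0, ∞)`, costs at most twice its height, so in `t` the
two sides differ by at most `2√μ`. For `t > α²` only the finitely many `ℓ` with `|ℓ + ξ| < L√μ`
contribute, and for `t ≥ T_{μ,L}` none does because `|ℓ + ξ| ≥ min ξ (1 - ξ)`. Hence `∑ w_ℓ(μ)` is
the integral over `[α², T_{μ,L}]` of a finite sum, and the difference is at most
`2√μ (T_{μ,L} - α²) ≤ 2√μ ln μ` once `μ` is large.
-/

open Real MeasureTheory Set

theorem AntitoneOn.tsum_sub_integral_Ioi_mem_Icc {g : ℝ → ℝ} (hanti : AntitoneOn g (Ici 0))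
    (hg : IntegrableOn g (Ioi 0)) (hg0 : ∀ x ∈ Ioi (0 : ℝ), 0 ≤ g x) :
    (∑' n : ℕ, g n) - ∫ x in Ioi 0, g x ∈ Icc 0 (g 0) := by
  have := hanti.integral_le_tsum (hanti.summable_of_integrableOn_Ioi_zero hg hg0) hg0
  have := hanti.tsum_le_integral hg hg0
  constructor <;> linarith

theorem setIntegral_Ioi_comp_neg_sub (g : ℝ → ℝ) (a b : ℝ) :
    ∫ x in Ioi a, g (-x - b) = ∫ x in Iic (-a - b), g x := by
  rw [integral_comp_neg_Ioi a (fun y ↦ g (y - b)), ← integral_indicator measurableSet_Iic,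
    ← integral_indicator measurableSet_Iic,
    ← integral_sub_right_eq_self (indicator (Iic (-a - b)) g) b]
  congr 1 with x
  simp [indicator_apply]

theorem abs_integral_sub_tsum_int_le {g : ℝ → ℝ} {M : ℝ} (hg : Integrable g)
    (hg0 : ∀ x, 0 ≤ g x) (hgM : ∀ x, g x ≤ M)
    (hmono : MonotoneOn g (Iic (-1))) (hanti : AntitoneOn g (Ici 0)) :
    |(∫ x, g x) - ∑' n : ℤ, g n| ≤ 2 * M := by
  have hanti' : AntitoneOn (fun x ↦ g (-x - 1)) (Ici 0) := fun x hx y hy hxy ↦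
    hmono (by simp at *; linarith) (by simp at *; linarith) (by linarith)
  have hg' : IntegrableOn (fun x ↦ g (-x - 1)) (Ioi 0) := by
    simpa [sub_eq_add_neg, add_comm] using (hg.comp_neg.comp_add_right 1).integrableOn
  obtain ⟨hR₀, hR₁⟩ := hanti.tsum_sub_integral_Ioi_mem_Icc hg.integrableOn fun x _ ↦ hg0 x
  obtain ⟨hL₀, hL₁⟩ := hanti'.tsum_sub_integral_Ioi_mem_Icc hg' fun x _ ↦ hg0 _
  rw [setIntegral_Ioi_comp_neg_sub] at hL₀ hL₁
  have hsum : ∑' n : ℤ, g n = ∑' n : ℕ, g n + ∑' n : ℕ, g (-n - 1) := by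
    have hcast (n : ℕ) : g ((-(n + 1) : ℤ) : ℝ) = g (-n - 1) := by push_cast; ring_nf
    rw [tsum_of_nat_of_neg_add_one (f := fun n : ℤ ↦ g n)
      (hanti.summable_of_integrableOn_Ioi_zero hg.integrableOn fun x _ ↦ hg0 x)
      (by simpa only [hcast] using hanti'.summable_of_integrableOn_Ioi_zero hg' fun x _ ↦ hg0 _)]
    simp only [hcast, Int.cast_natCast]
  have hsplit₀ : (∫ x in Iic 0, g x) + ∫ x in Ioi 0, g x = ∫ x, g x :=
    intervalIntegral.integral_Iic_add_Ioi hg.integrableOn hg.integrableOn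
  have hsplit₁ : (∫ x in Iic 0, g x) - ∫ x in Iic (-1), g x = ∫ x in (-1)..0, g x :=
    intervalIntegral.integral_Iic_sub_Iic hg.integrableOn hg.integrableOn
  have hmid₀ : 0 ≤ ∫ x in (-1)..0, g x :=
    intervalIntegral.integral_nonneg (by norm_num) fun x _ ↦ hg0 x
  have hmid₁ : ∫ x in (-1)..0, g x ≤ M := by
    simpa using intervalIntegral.integral_mono_on (by norm_num : (-1 : ℝ) ≤ 0)
      hg.intervalIntegrable (intervalIntegrable_const (c := M)) fun x _ ↦ hgM x
  have hg0M : g 0 ≤ M := hgM 0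
  have hg1M : g (-1) ≤ M := hgM (-1)
  norm_num at hL₀ hL₁ ⊢
  rw [abs_le]
  constructor <;> linarith

noncomputable def halfEllipse (a b c x : ℝ) : ℝ := √(max (a - (x + c) ^ 2 * b) 0)

section HalfEllipse

variable {a b c x : ℝ}

@[fun_prop]
theorem Continuous.halfEllipse {α : Type*} [TopologicalSpace α] {a b c x : α → ℝ}
    (ha : Continuous a) (hb : Continuous b) (hc : Continuous c) (hx : Continuous x) :
    Continuous fun y ↦ halfEllipse (a y) (b y) (c y) (x y) := by
  unfold _root_.halfEllipse
  fun_prop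

theorem halfEllipse_nonneg : 0 ≤ halfEllipse a b c x := sqrt_nonneg _

theorem halfEllipse_le_sqrt (hb : 0 ≤ b) : halfEllipse a b c x ≤ √a := by
  unfold halfEllipse
  rcases le_total a 0 with h | h
  · rw [max_eq_right (by nlinarith [sq_nonneg (x + c)]), sqrt_zero]; exact sqrt_nonneg _
  · exact sqrt_le_sqrt (max_le (by nlinarith [sq_nonneg (x + c)]) h)

theorem halfEllipse_eq_zero (h : a ≤ (x + c) ^ 2 * b) : halfEllipse a b c x = 0 := by
  rw [halfEllipse, max_eq_right (by linarith), sqrt_zero]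

theorem hasCompactSupport_halfEllipse (hb : 0 < b) : HasCompactSupport (halfEllipse a b c) := by
  refine HasCompactSupport.intro (isCompact_Icc (a := -c - √(a / b)) (b := -c + √(a / b)))
    fun x hx ↦ halfEllipse_eq_zero ?_
  have hr : √(a / b) < |x + c| := by
    rw [mem_Icc, not_and_or, not_le, not_le] at hx
    rcases hx with hx | hx
    · rw [abs_of_neg (by linarith [sqrt_nonneg (a / b)])]; linarith
    · rw [abs_of_pos (by linarith [sqrt_nonneg (a / b)])]; linarith
  have := lt_sq_of_sqrt_lt hr
  rw [sq_abs, div_lt_iff₀ hb] at this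
  exact this.le

theorem integrable_halfEllipse (hb : 0 < b) : Integrable (halfEllipse a b c) :=
  (by fun_prop : Continuous (halfEllipse a b c)).integrable_of_hasCompactSupport
    (hasCompactSupport_halfEllipse hb)

theorem monotoneOn_halfEllipse (hb : 0 ≤ b) : MonotoneOn (halfEllipse a b c) (Iic (-c)) :=
  fun x hx y hy hxy ↦ sqrt_le_sqrt <| max_le_max_right 0 <| by
    simp only [mem_Iic] at hx hy
    nlinarith [mul_nonneg (mul_nonneg (sub_nonneg.2 hxy) (by linarith : 0 ≤ -x - y - 2 * c)) hb]

theorem antitoneOn_halfEllipse (hb : 0 ≤ b) : AntitoneOn (halfEllipse a b c) (Ici (-c)) :=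
  fun x hx y hy hxy ↦ sqrt_le_sqrt <| max_le_max_right 0 <| by
    simp only [mem_Ici] at hx hy
    nlinarith [mul_nonneg (mul_nonneg (sub_nonneg.2 hxy) (by linarith : 0 ≤ x + y + 2 * c)) hb]

theorem integral_sqrt_max_one_sub_sq : ∫ x, √(max (1 - x ^ 2) 0) = π / 2 := by
  rw [← intervalIntegral.integral_eq_integral_of_support_subset (a := -1) (b := 1),
    ← integral_sqrt_one_sub_sq]
  · refine intervalIntegral.integral_congr fun x hx ↦ ?_
    rw [uIcc_of_le (by norm_num), mem_Icc] at hx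
    rw [max_eq_left (by nlinarith)]
  · intro x hx
    simp only [Function.mem_support, ne_eq] at hx
    constructor <;> by_contra! h <;> exact hx (by rw [max_eq_right (by nlinarith), sqrt_zero])

theorem halfEllipse_eq_sqrt_mul (ha : 0 < a) (hb : 0 < b) :
    halfEllipse a b c x = √a * √(max (1 - ((√(a / b))⁻¹ * (x + c)) ^ 2) 0) := by
  rw [halfEllipse, ← sqrt_mul ha.le, mul_max_of_nonneg _ _ ha.le, mul_zero, mul_pow, inv_pow,
    sq_sqrt (by positivity)]
  congr 2
  field_simp

theorem integral_halfEllipse (ha : 0 < a) (hb : 0 < b) :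
    ∫ x, halfEllipse a b c x = π / 2 * a / √b := by
  set G : ℝ → ℝ := fun y ↦ √(max (1 - y ^ 2) 0)
  have hshift : ∫ x, G ((√(a / b))⁻¹ * (x + c)) = ∫ x, G ((√(a / b))⁻¹ * x) :=
    integral_add_right_eq_self (fun x ↦ G ((√(a / b))⁻¹ * x)) c
  simp_rw [halfEllipse_eq_sqrt_mul ha hb, integral_const_mul]
  rw [hshift, Measure.integral_comp_inv_mul_left, integral_sqrt_max_one_sub_sq, smul_eq_mul,
    abs_of_nonneg (sqrt_nonneg _), sqrt_div ha.le]
  field_simp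
  exact sq_sqrt ha.le

end HalfEllipse

theorem abs_integral_sub_tsum_halfEllipse_le {a b ξ : ℝ} (hb : 0 < b) (hξ : ξ ∈ Icc 0 1) :
    |(∫ x, halfEllipse a b ξ x) - ∑' ℓ : ℤ, halfEllipse a b ξ ℓ| ≤ 2 * √a :=
  abs_integral_sub_tsum_int_le (integrable_halfEllipse hb) (fun _ ↦ halfEllipse_nonneg)
    (fun _ ↦ halfEllipse_le_sqrt hb.le)
    ((monotoneOn_halfEllipse hb.le).mono (Iic_subset_Iic.2 (by linarith [hξ.2])))
    ((antitoneOn_halfEllipse hb.le).mono (Ici_subset_Ici.2 (by linarith [hξ.1])))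

theorem min_le_abs_intCast_add (ℓ : ℤ) (ξ : ℝ) : min ξ (1 - ξ) ≤ |ℓ + ξ| := by
  rcases le_or_gt 0 ℓ with h | h
  · have : (0 : ℝ) ≤ ℓ := by exact_mod_cast h
    exact (min_le_left _ _).trans ((by linarith : ξ ≤ ℓ + ξ).trans (le_abs_self _))
  · have : (ℓ : ℝ) ≤ -1 := by exact_mod_cast (by omega : ℓ ≤ -1)
    exact (min_le_right _ _).trans ((by linarith : 1 - ξ ≤ -(ℓ + ξ)).trans (neg_le_abs _))

theorem le_abs_intCast_add_of_notMem_Icc {K ℓ : ℤ} {ξ : ℝ} (hξ : |ξ| ≤ 1)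
    (hℓ : ℓ ∉ Finset.Icc (-K) K) : (K : ℝ) ≤ |ℓ + ξ| := by
  rw [abs_le] at hξ
  rw [Finset.mem_Icc, not_and_or, not_le, not_le] at hℓ
  rcases hℓ with h | h
  · have : (ℓ : ℝ) ≤ -K - 1 := by exact_mod_cast (by omega : ℓ ≤ -K - 1)
    exact (by linarith : (K : ℝ) ≤ -(ℓ + ξ)).trans (neg_le_abs _)
  · have : (K : ℝ) + 1 ≤ ℓ := by exact_mod_cast (by omega : K + 1 ≤ ℓ)
    exact (by linarith : (K : ℝ) ≤ ℓ + ξ).trans (le_abs_self _)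

theorem tsum_setIntegral_Ioi_eq_intervalIntegral_sum {ι : Type*} {f : ι → ℝ → ℝ} {a T : ℝ}
    (s : Finset ι) (haT : a ≤ T) (hf : ∀ i ∈ s, IntervalIntegrable (f i) volume a T)
    (hs : ∀ i ∉ s, ∀ t > a, f i t = 0) (hT : ∀ i, ∀ t > T, f i t = 0) :
    ∑' i, ∫ t in Ioi a, f i t = ∫ t in a..T, ∑ i ∈ s, f i t := by
  rw [intervalIntegral.integral_finsetSum hf, tsum_eq_sum fun i hi ↦
    setIntegral_eq_zero_of_forall_eq_zero (t := Ioi a) fun t ht ↦ hs i hi t ht]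
  refine Finset.sum_congr rfl fun i _ ↦ ?_
  rw [intervalIntegral.integral_of_le haT, setIntegral_eq_of_subset_of_forall_sdiff_eq_zero
    measurableSet_Ioi Ioc_subset_Ioi_self fun t ht ↦ hT i t ?_]
  simp_all

section Slices

variable {μ L ξ : ℝ}

theorem integral_halfEllipse_exp (hμ : 0 < μ) (hL : 0 < L) (t : ℝ) :
    ∫ x, halfEllipse μ (exp (2 * t) / L ^ 2) ξ x = π / 2 * μ * L * exp (-t) := by
  rw [integral_halfEllipse hμ (by positivity), sqrt_div (exp_pos _).le, sqrt_sq hL.le,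
    show 2 * t = t + t by ring, exp_add, sqrt_mul_self (exp_pos t).le, exp_neg]
  field_simp

theorem halfEllipse_exp_eq_zero {t x : ℝ} (hL : 0 < L) (hμ : 0 ≤ μ)
    (h : L * √μ ≤ exp t * |x + ξ|) : halfEllipse μ (exp (2 * t) / L ^ 2) ξ x = 0 := by
  refine halfEllipse_eq_zero ?_
  have hsq := pow_le_pow_left₀ (by positivity) h 2
  rw [mul_pow, mul_pow, sq_sqrt hμ, sq_abs, ← exp_nat_mul] at hsq
  rw [mul_div_assoc', le_div_iff₀ (by positivity)]
  push_cast at hsq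
  linarith

theorem halfEllipse_exp_intCast_eq_zero_of_log_le {t : ℝ} (ℓ : ℤ) (hL : 0 < L) (hμ : 0 ≤ μ)
    (hξ : 0 < min ξ (1 - ξ)) (ht : log (L * √μ / min ξ (1 - ξ)) ≤ t) :
    halfEllipse μ (exp (2 * t) / L ^ 2) ξ ℓ = 0 := by
  refine halfEllipse_exp_eq_zero hL hμ ?_
  calc L * √μ = L * √μ / min ξ (1 - ξ) * min ξ (1 - ξ) := by field_simp
    _ ≤ exp t * |ℓ + ξ| := mul_le_mul ((le_exp_log _).trans (exp_le_exp.2 ht))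
        (min_le_abs_intCast_add ℓ ξ) hξ.le (exp_pos _).le

theorem halfEllipse_exp_intCast_eq_zero_of_notMem_Icc {t : ℝ} {ℓ : ℤ} (hL : 0 < L) (hμ : 0 ≤ μ)
    (hξ : |ξ| ≤ 1) (ht : 0 ≤ t) (hℓ : ℓ ∉ Finset.Icc (-⌈L * √μ⌉) ⌈L * √μ⌉) :
    halfEllipse μ (exp (2 * t) / L ^ 2) ξ ℓ = 0 :=
  halfEllipse_exp_eq_zero hL hμ <| calc
    L * √μ ≤ ⌈L * √μ⌉ := Int.le_ceil _
    _ ≤ |ℓ + ξ| := le_abs_intCast_add_of_notMem_Icc hξ hℓ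
    _ ≤ exp t * |ℓ + ξ| := le_mul_of_one_le_left (abs_nonneg _) (one_le_exp ht)

end Slices

theorem sq_le_log_mul_sqrt_div {α L m μ : ℝ} (hL : 0 < L) (hm : 0 < m)
    (h : m * exp (α ^ 2) / L ≤ √μ) : α ^ 2 ≤ log (L * √μ / m) := by
  have hμ : 0 < √μ := h.trans_lt' (by positivity)
  rw [div_le_iff₀ hL] at h
  rw [le_log_iff_exp_le (div_pos (mul_pos hL hμ) hm), le_div_iff₀ hm]
  linarith

theorem log_mul_sqrt_div_le_log {L m μ : ℝ} (hL : 0 < L) (hm : 0 < m) (hμ : 0 < μ)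
    (h : L / m ≤ √μ) : log (L * √μ / m) ≤ log μ := by
  rw [div_le_iff₀ hm] at h
  refine log_le_log (by positivity) ?_
  rw [div_le_iff₀ hm]
  nlinarith [mul_self_sqrt hμ.le, sqrt_nonneg μ]

theorem sum_vs_double_integral_general
    (α L ξ : ℝ) (hL : 0 < L) (hξ : ξ ∈ Set.Ioo (0 : ℝ) 1) :
    ∃ C : ℝ, 1 < C ∧ ∃ μ₀ : ℝ, 0 < μ₀ ∧ ∀ μ : ℝ, μ₀ ≤ μ →
      |(∫ t in (α ^ 2)..(Real.log (L * Real.sqrt μ / min ξ (1 - ξ))),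
            ∫ x : ℝ, Real.sqrt (max (μ - (x + ξ) ^ 2 * Real.exp (2 * t) / L ^ 2) 0)) -
          ∑' ℓ : ℤ,
            ∫ t in Set.Ioi (α ^ 2),
              Real.sqrt (max (μ - ((ℓ : ℝ) + ξ) ^ 2 * Real.exp (2 * t) / L ^ 2) 0)| ≤
        C * Real.sqrt μ * Real.log μ := by
  set m := min ξ (1 - ξ)
  have hm : 0 < m := lt_min hξ.1 (by linarith [hξ.2])
  set R := max (L / m) (m * exp (α ^ 2) / L)
  have hR : 0 < R := lt_max_of_lt_left (by positivity)
  refine ⟨2, one_lt_two, R ^ 2, by positivity, fun μ hμ ↦ ?_⟩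
  have hμ0 : 0 < μ := (pow_pos hR 2).trans_le hμ
  have hRμ : R ≤ √μ := (le_sqrt hR.le hμ0.le).2 hμ
  set T := log (L * √μ / m)
  have hαT : α ^ 2 ≤ T := sq_le_log_mul_sqrt_div hL hm ((le_max_right _ _).trans hRμ)
  have hTμ : T ≤ log μ := log_mul_sqrt_div_le_log hL hm hμ0 ((le_max_left _ _).trans hRμ)
  have hξ₁ : |ξ| ≤ 1 := abs_le.2 ⟨by linarith [hξ.1], hξ.2.le⟩
  set s := Finset.Icc (-⌈L * √μ⌉) ⌈L * √μ⌉
  have hs : ∀ ℓ ∉ s, ∀ t > α ^ 2, halfEllipse μ (exp (2 * t) / L ^ 2) ξ ℓ = 0 :=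
    fun ℓ hℓ t ht ↦ halfEllipse_exp_intCast_eq_zero_of_notMem_Icc hL hμ0.le hξ₁
      ((sq_nonneg α).trans ht.le) hℓ
  have hF : Continuous fun t ↦ ∫ x, halfEllipse μ (exp (2 * t) / L ^ 2) ξ x := by
    simp_rw [integral_halfEllipse_exp hμ0 hL]
    fun_prop
  simp only [mul_div_assoc, ← halfEllipse.eq_1]
  rw [tsum_setIntegral_Ioi_eq_intervalIntegral_sum s hαT
      (fun ℓ _ ↦ (by fun_prop : Continuous _).intervalIntegrable _ _) hs
      fun ℓ t ht ↦ halfEllipse_exp_intCast_eq_zero_of_log_le ℓ hL hμ0.le hm ht.le,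
    ← intervalIntegral.integral_sub (hF.intervalIntegrable _ _)
      ((by fun_prop : Continuous _).intervalIntegrable _ _), ← Real.norm_eq_abs]
  calc _ ≤ 2 * √μ * |T - α ^ 2| :=
        intervalIntegral.norm_integral_le_of_norm_le_const fun t ht ↦ ?_
    _ ≤ 2 * √μ * log μ := by
        rw [abs_of_nonneg (by linarith)]
        gcongr
        linarith [sq_nonneg α]
  rw [uIoc_of_le hαT] at ht
  rw [← tsum_eq_sum (L := .unconditional ℤ) fun ℓ hℓ ↦ hs ℓ hℓ t ht.1, Real.norm_eq_abs]
  exact abs_integral_sub_tsum_halfEllipse_le (by positivity) ⟨hξ.1.le, hξ.2.le⟩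

/-- Lemma 2.5 of the paper: there are `C > 1` and `μ₀ > 0` (depending only on
`α, L, ξ`) such that for all `μ ≥ μ₀`,
`| ∫_{α²}^{T_{μ,L}} ∫_ℝ max(μ − (x+ξ)² e^{2t}/L², 0)^{1/2} dx dt − Σ_{ℓ∈ℤ} w_ℓ(μ) |
  ≤ C √μ ln μ`,
where `w_ℓ(μ) = ∫_{α²}^{∞} max(μ − (ℓ+ξ)² e^{2t}/L², 0)^{1/2} dt` and
`T_{μ,L} = ln(L√μ / min(ξ, 1−ξ))`. -/
theorem sum_vs_double_integral
    (α L ξ : ℝ) (hα : 0 < α) (hL : 0 < L) (hξ : ξ ∈ Set.Ioo (0 : ℝ) 1) :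
    ∃ C : ℝ, 1 < C ∧ ∃ μ₀ : ℝ, 0 < μ₀ ∧ ∀ μ : ℝ, μ₀ ≤ μ →
      |(∫ t in (α ^ 2)..(Real.log (L * Real.sqrt μ / min ξ (1 - ξ))),
            ∫ x : ℝ, Real.sqrt (max (μ - (x + ξ) ^ 2 * Real.exp (2 * t) / L ^ 2) 0)) -
          ∑' ℓ : ℤ,
            ∫ t in Set.Ioi (α ^ 2),
              Real.sqrt (max (μ - ((ℓ : ℝ) + ξ) ^ 2 * Real.exp (2 * t) / L ^ 2) 0)| ≤
        C * Real.sqrt μ * Real.log μ :=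
  sum_vs_double_integral_general α L ξ hL hξ
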